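/- Let X be a continuum without cut-points and S_1 ⊆ … ⊆ S_k an increasing sequence of closed subsets of X with S_k ≠ ∅, and let E_X denote the set of isolated points of I(X,S⃗). Then for a point z ∈ J(X,S⃗), the following are equivalent: (a) z ∈ E_X × {0}; (b) z satisfies both (α) for every open set U containing z there is a connected open set V with z ∈ V ⊆ U such that V contains a cut-point of J(X,S⃗), and (β) z is a noncut-point of J(X,S⃗). -/

import Mathlib

open Topology

/-- The set of isolated points of the subspace `S` (computed in the ambient space `W`). -/
def isoPts {W : Type*} [TopologicalSpace W] (S : Set W) : Set W :=
  {p | p ∈ S ∧ 𝓝[S \ {p}] p = ⊥}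

/-- The canonical embedding of `X` into the ambient space `X × ℝ^ℕ`. -/
def embW {X : Type*} (x : X) : X × (ℕ → ℝ) := (x, fun _ => 0)

/-- The canonical copy of `X` inside `X × ℝ^ℕ`. -/
def baseW (X : Type*) : Set (X × (ℕ → ℝ)) := {w | w.2 = fun _ => 0}

/-- Place the value `t` in coordinate `j`. -/
def addC {X : Type*} (j : ℕ) (t : ℝ) (w : X × (ℕ → ℝ)) : X × (ℕ → ℝ) :=
  (w.1, Function.update w.2 j t)

/-- `Z'` is a copy of `I(Z, B; D)` for some admissible `D`, realized using coordinate `j`: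
`Z' = Z ∪ D` where `D` is a nonempty set of points `addC j t z` (`z ∈ Z`, `t ∈ (0,1]`),
each of which is isolated in `Z'`, with `cl(D) − D = B`; by convention `D` is a single point
when `B = ∅`. -/
def IsIStep {X : Type*} [TopologicalSpace X] (j : ℕ)
    (Z B Z' : Set (X × (ℕ → ℝ))) : Prop :=
  ∃ D : Set (X × (ℕ → ℝ)),
    Z' = Z ∪ D ∧ D.Nonempty ∧
    (∀ p ∈ D, ∃ z ∈ Z, ∃ t ∈ Set.Ioc (0 : ℝ) 1, p = addC j t z) ∧
    (∀ p ∈ D, 𝓝[Z' \ {p}] p = ⊥) ∧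
    closure D \ D = B ∧
    (B = ∅ → D.Subsingleton)

/-- The iterated construction: `IsITowerFrom j Z As Z'` says that `Z'` is obtained from `Z`
by successively applying the `I(·, D_k ∪ A_{k+1})` construction along the list `As`,
where `D_k` is the current set of isolated points. -/
def IsITowerFrom {X : Type*} [TopologicalSpace X] :
    ℕ → Set (X × (ℕ → ℝ)) → List (Set X) → Set (X × (ℕ → ℝ)) → Prop
  | _, Z, [], Z' => Z' = Z
  | j, Z, A :: rest, Z' =>
      ∃ Zm, IsIStep j Z (isoPts Z ∪ (embW '' A)) Zm ∧ IsITowerFrom (j + 1) Zm rest Z'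

/-- `Z` is a model of `I_n(X, A_1, …, A_n)` where `As = [A_1, …, A_n]`. -/
def IsIModel {X : Type*} [TopologicalSpace X] (As : List (Set X))
    (Z : Set (X × (ℕ → ℝ))) : Prop :=
  IsITowerFrom 0 (baseW X) As Z


/-- The underlying set of `F(Z,B)`: the subspace `Z×{0} ∪ B×[0,1]` of `Z × [0,1]`. -/
abbrev FPts (Z : Type*) (B : Set Z) := {p : Z × unitInterval // p.2 = 0 ∨ p.1 ∈ B}

/-- The relation identifying all points of `B × {1}` to one point. -/
def FRel {Z : Type*} {B : Set Z} (p q : FPts Z B) : Prop :=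
  p = q ∨ (p.val.2 = 1 ∧ q.val.2 = 1)

/-- The space `F(Z,B)`: the quotient of `Z×{0} ∪ B×[0,1]` collapsing `B × {1}` to a point. -/
abbrev FSp (Z : Type*) [TopologicalSpace Z] (B : Set Z) := Quot (@FRel Z B)

/-- The closure of the set `D_X` of added points, viewed inside the subspace `Z`. -/
def JB {X : Type*} [TopologicalSpace X] (Z : Set (X × (ℕ → ℝ))) : Set ↥Z :=
  {z | (z : X × (ℕ → ℝ)) ∈ closure (Z \ baseW X)}

/-- The space `J(X, S⃗) = F(I(X,S⃗), cl(D_X))`, for `Z` a model of `I(X,S⃗)`. -/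
abbrev JSp {X : Type*} [TopologicalSpace X] (Z : Set (X × (ℕ → ℝ))) :=
  FSp (↥Z) (JB Z)

/-- The point of `J(X,S⃗)` determined by a representative. -/
def JPt {X : Type*} [TopologicalSpace X] (Z : Set (X × (ℕ → ℝ)))
    (p : FPts (↥Z) (JB Z)) : JSp Z := Quot.mk FRel p

/-!
`J(X,S⃗)` is `X × {0}` together with the cone over `B = cl(D_X)`, and the isolated points of
`I(X,S⃗)` lie off `X`, hence in `B`. Over an isolated point `p` the segment `{p} × [0,1)` is clopen
in the complement of the apex, so the apex and the points `(p,s)`, `0 < s < 1`, are cut points;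
they accumulate at `(p,0)` inside small connected open pieces of the segment.

Conversely, fix `x₀ ∈ S_k`, so that `(x₀,0)` lies in the cone. Any other point `(r,s)` below the
apex, with `r` not isolated if `s > 0`, is a noncut point: what remains of the cone is connected
(through the apex and, when `s > 0`, through `(r,0)`, a limit of other points of `B`), what remains
of `X × {0}` is connected because `X` has no cut points, and the two meet at `(x₀,0)`. As a
connected set below the apex that meets the segment over an isolated point stays inside it, a
point `(r,s)` with `r` not isolated has a neighbourhood in which every connected set through it
consists of noncut points.
-/

open Set Topology

theorem mem_closure_compl_singleton_iff {Y : Type*} [TopologicalSpace Y] {y : Y} :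
    y ∈ closure {y}ᶜ ↔ ¬IsOpen ({y} : Set Y) := by
  rw [mem_closure_iff_nhdsWithin_neBot, isOpen_singleton_iff_punctured_nhds, ← Filter.not_neBot,
    not_not]

theorem mem_isoPts_iff_isOpen_singleton {W : Type*} [TopologicalSpace W] {S : Set W} (p : S) :
    (p : W) ∈ isoPts S ↔ IsOpen ({p} : Set S) := by
  have himage : Subtype.val '' ({p}ᶜ : Set S) = S \ {(p : W)} := by
    ext x; constructor
    · rintro ⟨y, hy, rfl⟩; exact ⟨y.2, fun h => hy (Subtype.ext h)⟩
    · rintro ⟨hx, hxp⟩; exact ⟨⟨x, hx⟩, fun h => hxp (congrArg Subtype.val h), rfl⟩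
  rw [← not_iff_not, ← mem_closure_compl_singleton_iff, closure_subtype, himage,
    mem_closure_iff_nhdsWithin_neBot, isoPts, mem_ofPred_eq, and_iff_right p.2, Filter.neBot_iff]

theorem IsPreconnected.union_of_mem_closure {α : Type*} [TopologicalSpace α] {s t : Set α}
    {x : α} (hs : IsPreconnected s) (ht : IsPreconnected t) (hxt : x ∈ t)
    (hxs : x ∈ closure s) : IsPreconnected (s ∪ t) := by
  have hins : IsPreconnected (insert x s) :=
    hs.subset_closure (subset_insert x s) (insert_subset hxs subset_closure)
  simpa [insert_union, insert_eq_of_mem (mem_union_right s hxt)] using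
    hins.union x (mem_insert x s) hxt ht

namespace FSp

variable {Y : Type*} {B : Set Y}

theorem frel_equivalence : Equivalence (@FRel Y B) where
  refl _ := Or.inl rfl
  symm h := h.imp Eq.symm And.symm
  trans h₁ h₂ := by
    rcases h₁ with rfl | h₁
    · exact h₂
    · rcases h₂ with rfl | h₂
      · exact Or.inr h₁
      · exact Or.inr ⟨h₁.1, h₂.2⟩

theorem mk_eq_mk_iff {a b : FPts Y B} :
    Quot.mk (@FRel Y B) a = Quot.mk FRel b ↔ a = b ∨ (a.1.2 = 1 ∧ b.1.2 = 1) := by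
  rw [Quot.eq, Equivalence.eqvGen_iff frel_equivalence]; rfl

theorem mk_eq_mk_iff_of_ne_one {a b : FPts Y B} (ha : a.1.2 ≠ 1) :
    Quot.mk (@FRel Y B) a = Quot.mk FRel b ↔ a = b := by
  rw [mk_eq_mk_iff]; exact or_iff_left (fun h => ha h.1)

theorem mk_mem_mk_image_iff {P : Set (FPts Y B)} (hP : ∀ a ∈ P, a.1.2 ≠ 1) (b : FPts Y B) :
    Quot.mk (@FRel Y B) b ∈ Quot.mk FRel '' P ↔ b ∈ P := by
  refine ⟨?_, mem_image_of_mem _⟩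
  rintro ⟨a, ha, hab⟩
  exact (mk_eq_mk_iff_of_ne_one (hP a ha)).1 hab ▸ ha

variable [TopologicalSpace Y]

theorem isOpen_mk_image {P : Set (FPts Y B)} (hP : IsOpen P) (hP1 : ∀ a ∈ P, a.1.2 ≠ 1) :
    IsOpen (Quot.mk FRel '' P : Set (FSp Y B)) := by
  rw [isOpen_coinduced]
  convert hP using 1
  ext b; exact mk_mem_mk_image_iff hP1 b

theorem isClosed_mk_image {P : Set (FPts Y B)} (hP : IsClosed P) (hP1 : ∀ a ∈ P, a.1.2 ≠ 1) :
    IsClosed (Quot.mk FRel '' P : Set (FSp Y B)) := by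
  rw [← isOpen_compl_iff, isOpen_coinduced, preimage_compl, isOpen_compl_iff]
  convert hP using 1
  ext b; exact mk_mem_mk_image_iff hP1 b

theorem compl_singleton_mk {w : FPts Y B} (hw : w.1.2 ≠ 1) :
    ({Quot.mk FRel w}ᶜ : Set (FSp Y B)) = Quot.mk FRel '' {w}ᶜ := by
  ext q
  obtain ⟨a, rfl⟩ := Quot.exists_rep q
  rw [mem_compl_iff, mem_singleton_iff, eq_comm, mk_eq_mk_iff_of_ne_one hw]
  refine ⟨fun h => ⟨a, Ne.symm h, rfl⟩, ?_⟩
  rintro ⟨b, hb, hba⟩ rfl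
  exact hb ((mk_eq_mk_iff_of_ne_one hw).1 hba.symm).symm

theorem continuous_val_fst : Continuous fun a : FPts Y B => a.1.1 :=
  continuous_fst.comp continuous_subtype_val

theorem continuous_val_snd : Continuous fun a : FPts Y B => a.1.2 :=
  continuous_snd.comp continuous_subtype_val

def arc (u : Y) (hu : u ∈ B) (t : unitInterval) : FSp Y B :=
  Quot.mk FRel ⟨(u, t), Or.inr hu⟩

def incl (y : Y) : FSp Y B :=
  Quot.mk FRel ⟨(y, 0), Or.inl rfl⟩

theorem continuous_arc {u : Y} (hu : u ∈ B) : Continuous (arc u hu) :=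
  continuous_quot_mk.comp ((continuous_const.prodMk continuous_id).subtype_mk _)

theorem continuous_incl : Continuous (incl : Y → FSp Y B) :=
  continuous_quot_mk.comp ((continuous_id.prodMk continuous_const).subtype_mk _)

theorem incl_injective : Function.Injective (incl : Y → FSp Y B) := fun _ _ h =>
  congrArg (fun a : FPts Y B => a.1.1) ((mk_eq_mk_iff_of_ne_one zero_ne_one).1 h)

theorem mk_eq_arc {a : FPts Y B} (ha : a.1.1 ∈ B) : Quot.mk FRel a = arc a.1.1 ha a.1.2 := rfl

theorem arc_eq_arc_iff {u : Y} {hu : u ∈ B} {t t' : unitInterval} (ht : t ≠ 1) :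
    arc u hu t = arc u hu t' ↔ t = t' := by
  rw [arc, arc, mk_eq_mk_iff_of_ne_one ht]
  simp

theorem mk_image_fiber {u : Y} (hu : u ∈ B) (T : Set unitInterval) :
    Quot.mk FRel '' {a : FPts Y B | a.1.1 = u ∧ a.1.2 ∈ T} = arc u hu '' T := by
  ext q; constructor
  · rintro ⟨a, ⟨rfl, ha⟩, rfl⟩; exact ⟨a.1.2, ha, rfl⟩
  · rintro ⟨t, ht, rfl⟩; exact ⟨⟨(u, t), Or.inr hu⟩, ⟨rfl, ht⟩, rfl⟩

theorem isOpen_arc_image {p : Y} (hp : IsOpen {p}) (hpB : p ∈ B) {T : Set unitInterval}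
    (hT : IsOpen T) (hT1 : 1 ∉ T) : IsOpen (arc p hpB '' T) := by
  rw [← mk_image_fiber]
  refine isOpen_mk_image ?_ fun a ha h => hT1 (h ▸ ha.2)
  exact (hp.preimage continuous_val_fst).inter (hT.preimage continuous_val_snd)

theorem fst_eq_of_isPreconnected [T1Space Y] {p : Y} (hp : IsOpen {p}) {V : Set (FSp Y B)}
    (hV : IsPreconnected V) (hV1 : ∀ b : FPts Y B, Quot.mk FRel b ∈ V → b.1.2 ≠ 1)
    {a b : FPts Y B} (ha : Quot.mk FRel a ∈ V) (hb : Quot.mk FRel b ∈ V) (hap : a.1.1 = p) :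
    b.1.1 = p := by
  set P₁ : Set (FPts Y B) := {c | c.1.1 = p ∧ c.1.2 ≠ 1}
  set P₂ : Set (FPts Y B) := {c | c.1.1 ≠ p ∧ c.1.2 ≠ 1}
  have hsnd : IsOpen {c : FPts Y B | c.1.2 ≠ 1} := isOpen_ne.preimage continuous_val_snd
  have h₁ : ∀ c ∈ P₁, c.1.2 ≠ 1 := fun c hc => hc.2
  have h₂ : ∀ c ∈ P₂, c.1.2 ≠ 1 := fun c hc => hc.2
  have hsub : V ⊆ Quot.mk FRel '' P₁ ∪ Quot.mk FRel '' P₂ := by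
    intro q hq
    obtain ⟨c, rfl⟩ := Quot.exists_rep q
    by_cases hc : c.1.1 = p
    exacts [Or.inl ⟨c, ⟨hc, hV1 c hq⟩, rfl⟩, Or.inr ⟨c, ⟨hc, hV1 c hq⟩, rfl⟩]
  have hdisj : Disjoint (Quot.mk FRel '' P₁ : Set (FSp Y B)) (Quot.mk FRel '' P₂) := by
    refine disjoint_left.2 ?_
    rintro _ ⟨c, hc, rfl⟩ hc'
    exact ((mk_mem_mk_image_iff h₂ c).1 hc').1 hc.1
  have hVP₁ := hV.subset_left_of_subset_union
    (isOpen_mk_image ((hp.preimage continuous_val_fst).inter hsnd) h₁)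
    (isOpen_mk_image ((isClosed_singleton.isOpen_compl.preimage continuous_val_fst).inter hsnd) h₂)
    hdisj hsub ⟨_, ha, a, ⟨hap, hV1 a ha⟩, rfl⟩
  exact ((mk_mem_mk_image_iff h₁ b).1 (hVP₁ hb)).1

theorem not_isPreconnected_compl_arc [T1Space Y] {p : Y} (hp : IsOpen {p}) (hpB : p ∈ B)
    {s : unitInterval} (hs0 : s ≠ 0) (hs1 : s ≠ 1) :
    ¬IsPreconnected ({arc p hpB s}ᶜ : Set (FSp Y B)) := by
  intro hV
  have hlow : IsOpen (arc p hpB '' Iio s) :=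
    isOpen_arc_image hp hpB isOpen_Iio fun h => not_lt.2 unitInterval.le_one' h
  have hhigh : IsOpen (arc p hpB '' Iic s)ᶜ := by
    rw [isOpen_compl_iff, ← mk_image_fiber]
    refine isClosed_mk_image ?_ fun a ha h => hs1 (le_antisymm unitInterval.le_one' (h ▸ ha.2))
    exact (isClosed_singleton.preimage continuous_val_fst).inter
      (isClosed_Iic.preimage continuous_val_snd)
  have hsub : {arc p hpB s}ᶜ ⊆ arc p hpB '' Iio s ∪ (arc p hpB '' Iic s)ᶜ := by
    intro q hq
    by_cases hq' : q ∈ arc p hpB '' Iic s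
    · obtain ⟨t, ht, rfl⟩ := hq'
      exact Or.inl ⟨t, lt_of_le_of_ne ht fun h => hq (congrArg (arc p hpB) h), rfl⟩
    · exact Or.inr hq'
  have hdisj : Disjoint (arc p hpB '' Iio s) (arc p hpB '' Iic s)ᶜ :=
    disjoint_compl_right.mono_left (image_mono Iio_subset_Iic_self)
  have h0 : arc p hpB 0 ∈ {arc p hpB s}ᶜ ∩ arc p hpB '' Iio s :=
    ⟨fun h => hs0 ((arc_eq_arc_iff zero_ne_one).1 h).symm,
      0, unitInterval.pos_iff_ne_zero.2 hs0, rfl⟩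
  have h1 : arc p hpB 1 ∈ {arc p hpB s}ᶜ :=
    mem_compl_singleton_iff.2 fun h => hs1 ((arc_eq_arc_iff hs1).1 h.symm)
  obtain ⟨t, ht, h⟩ := image_mono Iio_subset_Iic_self
    (hV.subset_left_of_subset_union hlow hhigh hdisj hsub ⟨_, h0⟩ h1)
  have ht1 : t ≠ 1 := (ht.trans_lt (unitInterval.lt_one_iff_ne_one.2 hs1)).ne
  exact ht1 ((arc_eq_arc_iff ht1).1 h)

theorem not_isPreconnected_compl_mk_of_eq_one [T1Space Y] {p y : Y} (hp : IsOpen {p})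
    (hyp : y ≠ p) {a : FPts Y B} (ha : a.1.2 = 1) :
    ¬IsPreconnected ({Quot.mk FRel a}ᶜ : Set (FSp Y B)) := by
  intro hV
  have hbase : ∀ u : Y, incl u ∈ ({Quot.mk FRel a}ᶜ : Set (FSp Y B)) := fun u hu =>
    zero_ne_one (congrArg (fun b : FPts Y B => b.1.2)
      ((mk_eq_mk_iff_of_ne_one zero_ne_one).1 hu) |>.trans ha)
  exact hyp (fst_eq_of_isPreconnected hp hV
    (fun b hb hb1 => hb (mk_eq_mk_iff.2 (Or.inr ⟨hb1, ha⟩))) (hbase p) (hbase y) rfl)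

theorem exists_connected_nhds_cut [T1Space Y] {p : Y} (hp : IsOpen {p}) (hpB : p ∈ B)
    {U : Set (FSp Y B)} (hU : IsOpen U) (hpU : arc p hpB 0 ∈ U) :
    ∃ V, IsOpen V ∧ arc p hpB 0 ∈ V ∧ V ⊆ U ∧ IsConnected V ∧
      ∃ c ∈ V, ¬IsPreconnected ({c}ᶜ : Set (FSp Y B)) := by
  obtain ⟨u, hu0, hu⟩ := exists_Ico_subset_of_mem_nhds
    ((hU.preimage (continuous_arc hpB)).mem_nhds hpU) ⟨1, zero_lt_one⟩
  obtain ⟨τ, hτ0, hτu⟩ := exists_between hu0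
  refine ⟨arc p hpB '' Iio u,
    isOpen_arc_image hp hpB isOpen_Iio fun h => not_lt.2 unitInterval.le_one' h, ⟨0, hu0, rfl⟩,
    image_subset_iff.2 fun t ht => hu ⟨unitInterval.nonneg', ht⟩,
    ⟨⟨_, 0, hu0, rfl⟩, isPreconnected_Iio.image _ (continuous_arc hpB).continuousOn⟩,
    arc p hpB τ, ⟨τ, hτu, rfl⟩, ?_⟩
  exact not_isPreconnected_compl_arc hp hpB hτ0.ne' (hτu.trans_le unitInterval.le_one').ne

theorem isPreconnected_mk_image_of_upward {A : Set (FPts Y B)}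
    (hA : ∀ a ∈ A, a.1.1 ∈ B ∧ ∀ b : FPts Y B, b.1.1 = a.1.1 → a.1.2 ≤ b.1.2 → b ∈ A) :
    IsPreconnected (Quot.mk FRel '' A : Set (FSp Y B)) := by
  rcases A.eq_empty_or_nonempty with rfl | ⟨a₀, ha₀⟩
  · rw [image_empty]; exact isPreconnected_empty
  refine isPreconnected_of_forall (arc a₀.1.1 (hA a₀ ha₀).1 1) ?_
  rintro _ ⟨a, ha, rfl⟩
  refine ⟨arc a.1.1 (hA a ha).1 '' Icc a.1.2 1, ?_,
    ⟨1, ⟨unitInterval.le_one', le_rfl⟩, mk_eq_mk_iff.2 (Or.inr ⟨rfl, rfl⟩)⟩,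
    ⟨a.1.2, ⟨le_rfl, unitInterval.le_one'⟩, rfl⟩,
    isPreconnected_Icc.image _ (continuous_arc _).continuousOn⟩
  rintro _ ⟨t, ht, rfl⟩
  exact ⟨_, (hA a ha).2 ⟨(a.1.1, t), Or.inr (hA a ha).1⟩ rfl ht.1, rfl⟩

/-- For `J(X,S⃗)`, `K` is the copy of `X` and `B = cl(D_X)`. -/
structure IsNoncutBase (K B : Set Y) : Prop where
  isClosed : IsClosed K
  compl_subset : Kᶜ ⊆ B
  subset_closure : B ⊆ closure Kᶜ
  isPreconnected : IsPreconnected K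
  isPreconnected_diff : ∀ x ∈ K, IsPreconnected (K \ {x})

namespace IsNoncutBase

variable {K : Set Y}

theorem mem_closure_diff_singleton (h : IsNoncutBase K B) {r : Y} (hrB : r ∈ B)
    (hr : ¬IsOpen {r}) : r ∈ closure (B \ {r}) := by
  by_cases hrK : r ∈ K
  · have hsub : Kᶜ ⊆ B \ {r} := fun y hy => ⟨h.compl_subset hy, fun hyr => hy (hyr ▸ hrK)⟩
    exact closure_mono hsub (h.subset_closure hrB)
  · have hsub : {r}ᶜ ⊆ K ∪ B \ {r} := fun y hy =>
      (em (y ∈ K)).imp id fun hyK => ⟨h.compl_subset hyK, hy⟩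
    have hr' := closure_mono hsub (mem_closure_compl_singleton_iff.2 hr)
    rw [closure_union, h.isClosed.closure_eq] at hr'
    exact hr'.resolve_left hrK

theorem isPreconnected_incl_image_diff (h : IsNoncutBase K B) (q : FSp Y B) :
    IsPreconnected (incl '' K \ {q}) := by
  by_cases hq : q ∈ incl '' K
  · obtain ⟨x, hx, rfl⟩ := hq
    rw [← image_singleton, ← image_sdiff incl_injective]
    exact (h.isPreconnected_diff x hx).image _ continuous_incl.continuousOn
  · rw [sdiff_singleton_eq_self hq]
    exact h.isPreconnected.image _ continuous_incl.continuousOn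

theorem isPreconnected_mk_image_diff (h : IsNoncutBase K B) {w : FPts Y B}
    (hwiso : w.1.2 ≠ 0 → ¬IsOpen {w.1.1}) :
    IsPreconnected (Quot.mk FRel '' {a : FPts Y B | a.1.1 ∈ B ∧ a ≠ w} : Set (FSp Y B)) := by
  obtain ⟨⟨r, s⟩, hw⟩ := w
  set PC : Set (FPts Y B) := {a | a.1.1 ∈ B ∧ (a.1.1 ≠ r ∨ s < a.1.2)}
  set PL : Set (FPts Y B) := {a | a.1.1 = r ∧ a.1.2 ∈ Iio s}
  have hC : IsPreconnected (Quot.mk FRel '' PC : Set (FSp Y B)) :=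
    isPreconnected_mk_image_of_upward fun a ha =>
      ⟨ha.1, fun b hb hab => ⟨hb ▸ ha.1, hb ▸ ha.2.imp id (·.trans_le hab)⟩⟩
  rcases eq_or_ne s 0 with rfl | hs0
  · convert hC using 2
    ext ⟨⟨u, t⟩, ha⟩
    simp only [PC, mem_ofPred_eq, ne_eq, Subtype.mk.injEq, Prod.mk.injEq]
    grind [unitInterval.pos_iff_ne_zero]
  have hrB : r ∈ B := hw.resolve_left hs0
  have hsplit : {a : FPts Y B | a.1.1 ∈ B ∧ a ≠ ⟨(r, s), hw⟩} = PC ∪ PL := by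
    ext ⟨⟨u, t⟩, ha⟩
    simp only [PC, PL, mem_union, mem_ofPred_eq, ne_eq, Subtype.mk.injEq, Prod.mk.injEq, mem_Iio]
    grind [lt_trichotomy t s]
  have hr0 : incl r ∈ closure (Quot.mk FRel '' PC : Set (FSp Y B)) :=
    map_mem_closure continuous_incl (h.mem_closure_diff_singleton hrB (hwiso hs0))
      fun u hu => ⟨⟨(u, 0), Or.inl rfl⟩, ⟨hu.1, Or.inl hu.2⟩, rfl⟩
  rw [hsplit, image_union]
  refine hC.union_of_mem_closure ?_
    ⟨⟨(r, 0), Or.inl rfl⟩, ⟨rfl, unitInterval.pos_iff_ne_zero.2 hs0⟩, rfl⟩ hr0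
  rw [mk_image_fiber hrB]
  exact isPreconnected_Iio.image _ (continuous_arc hrB).continuousOn

theorem isPreconnected_compl_mk (h : IsNoncutBase K B) {x₀ : Y} (hx₀K : x₀ ∈ K)
    (hx₀B : x₀ ∈ B) {w : FPts Y B} (hw1 : w.1.2 ≠ 1) (hwx₀ : w.1.2 = 0 → w.1.1 ≠ x₀)
    (hwiso : w.1.2 ≠ 0 → ¬IsOpen {w.1.1}) :
    IsPreconnected ({Quot.mk FRel w}ᶜ : Set (FSp Y B)) := by
  have hsplit : ({w}ᶜ : Set (FPts Y B)) =
      {a | a.1.1 ∈ B ∧ a ≠ w} ∪ {a | a.1.1 ∈ K ∧ a.1.2 = 0 ∧ a ≠ w} := by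
    ext a
    by_cases haB : a.1.1 ∈ B
    · simp [haB]
    · have haK : a.1.1 ∈ K := not_not.1 fun haK => haB (h.compl_subset haK)
      simp [haB, haK, a.2.resolve_right haB]
  have hK : Quot.mk FRel '' {a : FPts Y B | a.1.1 ∈ K ∧ a.1.2 = 0 ∧ a ≠ w} =
      incl '' K \ {Quot.mk FRel w} := by
    ext q; constructor
    · rintro ⟨⟨⟨u, t⟩, ha⟩, ⟨hu, rfl, haw⟩, rfl⟩
      exact ⟨⟨u, hu, rfl⟩, fun h => haw ((mk_eq_mk_iff_of_ne_one zero_ne_one).1 h)⟩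
    · rintro ⟨⟨u, hu, rfl⟩, huw⟩
      exact ⟨_, ⟨hu, rfl, fun h => huw (congrArg (Quot.mk FRel) h)⟩, rfl⟩
  have hx₀ : incl x₀ ∈ Quot.mk FRel '' {a : FPts Y B | a.1.1 ∈ B ∧ a ≠ w} ∩
      (incl '' K \ {Quot.mk FRel w}) := by
    have hx₀w : incl x₀ ≠ Quot.mk FRel w := fun h' => by
      obtain rfl := (mk_eq_mk_iff_of_ne_one zero_ne_one).1 h'
      exact hwx₀ rfl rfl
    exact ⟨⟨_, ⟨hx₀B, fun h' => hx₀w (congrArg (Quot.mk FRel) h')⟩, rfl⟩, ⟨x₀, hx₀K, rfl⟩, hx₀w⟩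
  rw [compl_singleton_mk hw1, hsplit, image_union, hK]
  exact (h.isPreconnected_mk_image_diff hwiso).union' ⟨_, hx₀⟩ (h.isPreconnected_incl_image_diff _)

theorem exists_nhds_forall_isPreconnected_compl [T1Space Y] (h : IsNoncutBase K B) {x₀ : Y}
    (hx₀K : x₀ ∈ K) (hx₀B : x₀ ∈ B) {a : FPts Y B} (ha1 : a.1.2 ≠ 1) (ha : ¬IsOpen {a.1.1})
    (hβ : IsPreconnected ({Quot.mk FRel a}ᶜ : Set (FSp Y B))) :
    ∃ U : Set (FSp Y B), IsOpen U ∧ Quot.mk FRel a ∈ U ∧ ∀ V ⊆ U, IsPreconnected V →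
      Quot.mk FRel a ∈ V → ∀ c ∈ V, IsPreconnected ({c}ᶜ : Set (FSp Y B)) := by
  -- the base point `(x₀, 0)` may be a cut point, so it is removed unless it is `a` itself
  set e : FPts Y B := ⟨(x₀, 0), Or.inl rfl⟩
  set P : Set (FPts Y B) := {b | b.1.2 ≠ 1} \ ({e} \ {a})
  have hP1 : ∀ b ∈ P, b.1.2 ≠ 1 := fun b hb => hb.1
  have hPo : IsOpen P :=
    (isOpen_ne.preimage continuous_val_snd).sdiff
      ((finite_singleton e).subset sdiff_subset).isClosed
  refine ⟨Quot.mk FRel '' P, isOpen_mk_image hPo hP1, ⟨a, ⟨ha1, fun h => h.2 rfl⟩, rfl⟩, ?_⟩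
  intro V hVU hV haV c hc
  obtain ⟨b, hbP, rfl⟩ := hVU hc
  have hV1 : ∀ b : FPts Y B, Quot.mk FRel b ∈ V → b.1.2 ≠ 1 := fun b hb =>
    hP1 b ((mk_mem_mk_image_iff hP1 b).1 (hVU hb))
  by_cases hbo : IsOpen {b.1.1}
  · exact absurd (fst_eq_of_isPreconnected hbo hV hV1 hc haV rfl ▸ hbo) ha
  by_cases hba : b = a
  · rwa [hba]
  exact h.isPreconnected_compl_mk hx₀K hx₀B hbP.1
    (fun hb0 hbx => hbP.2 ⟨Subtype.ext (Prod.ext hbx hb0), hba⟩) fun _ => hbo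

theorem exists_isOpen_singleton_iff [T1Space Y] (h : IsNoncutBase K B) {x₀ : Y} (hx₀K : x₀ ∈ K)
    (hx₀B : x₀ ∈ B) (hiso : ∀ p, IsOpen ({p} : Set Y) → p ∉ K) {p₀ : Y} (hp₀ : IsOpen {p₀})
    (q : FSp Y B) :
    (∃ a : FPts Y B, Quot.mk FRel a = q ∧ IsOpen {a.1.1} ∧ a.1.2 = 0) ↔
      ((∀ U : Set (FSp Y B), IsOpen U → q ∈ U →
          ∃ V : Set (FSp Y B), IsOpen V ∧ q ∈ V ∧ V ⊆ U ∧ IsConnected V ∧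
            ∃ c ∈ V, ¬IsPreconnected ({c}ᶜ : Set (FSp Y B))) ∧
        IsPreconnected ({q}ᶜ : Set (FSp Y B))) := by
  constructor
  · rintro ⟨a, rfl, ha, ha0⟩
    have haB : a.1.1 ∈ B := h.compl_subset (hiso _ ha)
    have harc : Quot.mk FRel a = arc a.1.1 haB 0 := by rw [mk_eq_arc haB, ha0]
    refine ⟨fun U hU haU => harc ▸ exists_connected_nhds_cut ha haB hU (harc ▸ haU), ?_⟩
    exact h.isPreconnected_compl_mk hx₀K hx₀B (ha0.symm ▸ zero_ne_one)
      (fun _ hax => hiso _ ha (hax ▸ hx₀K)) fun ha0' => absurd ha0 ha0'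
  · rintro ⟨hα, hβ⟩
    obtain ⟨a, rfl⟩ := Quot.exists_rep q
    have ha1 : a.1.2 ≠ 1 := fun ha1 =>
      not_isPreconnected_compl_mk_of_eq_one hp₀ (fun h => hiso p₀ hp₀ (h ▸ hx₀K)) ha1 hβ
    by_cases ha : IsOpen {a.1.1}
    · refine ⟨a, rfl, ha, ?_⟩
      by_contra ha0
      exact not_isPreconnected_compl_arc ha (a.2.resolve_left ha0) ha0 ha1 hβ
    · obtain ⟨U, hU, haU, hUcut⟩ := h.exists_nhds_forall_isPreconnected_compl hx₀K hx₀B ha1 ha hβ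
      obtain ⟨V, -, haV, hVU, hV, c, hc, hccut⟩ := hα U hU haU
      exact absurd (hUcut V hVU hV.isPreconnected haV c hc) hccut

end IsNoncutBase

end FSp

section Tower

variable {X : Type*}

theorem addC_notMem_baseW {j : ℕ} {t : ℝ} (ht : t ≠ 0) (z : X × (ℕ → ℝ)) :
    addC j t z ∉ baseW X := fun h =>
  ht (by simpa [addC] using congrFun h j)

variable {Z : Set (X × (ℕ → ℝ))}

def baseIncl (hbZ : baseW X ⊆ Z) (x : X) : Z := ⟨embW x, hbZ rfl⟩

theorem baseIncl_injective (hbZ : baseW X ⊆ Z) : Function.Injective (baseIncl hbZ) := fun _ _ h =>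
  congrArg (fun z : Z => (z : X × (ℕ → ℝ)).1) h

theorem range_baseIncl (hbZ : baseW X ⊆ Z) : range (baseIncl hbZ) = Subtype.val ⁻¹' baseW X := by
  ext z; constructor
  · rintro ⟨x, rfl⟩; rfl
  · intro hz; exact ⟨(z : X × (ℕ → ℝ)).1, Subtype.ext (Prod.ext rfl hz.symm)⟩

variable [TopologicalSpace X]

theorem baseW_isClosed : IsClosed (baseW X) :=
  isClosed_singleton.preimage continuous_snd

namespace IsITowerFrom

variable {j : ℕ} {W Z' : Set (X × (ℕ → ℝ))} {l : List (Set X)}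

theorem subset (h : IsITowerFrom j W l Z') : W ⊆ Z' := by
  induction l generalizing j W with
  | nil => exact h.ge
  | cons A l ih =>
    obtain ⟨Zm, ⟨D, rfl, -⟩, h⟩ := h
    exact subset_union_left.trans (ih h)

theorem disjoint_isoPts (h : IsITowerFrom j W l Z') (hl : l ≠ []) : Disjoint (isoPts Z') W := by
  obtain _ | ⟨A, l⟩ := l
  · exact absurd rfl hl
  obtain ⟨Zm, ⟨D, rfl, -, -, -, hcl, -⟩, h⟩ := h
  have hDZ : D ⊆ Z' := subset_union_right.trans h.subset
  refine disjoint_left.2 fun p ⟨_, hp⟩ hpW => ?_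
  have hpW' : p ∈ isoPts W :=
    ⟨hpW, le_bot_iff.1 (hp ▸ nhdsWithin_mono p
      (sdiff_subset_sdiff_left (subset_union_left.trans h.subset)))⟩
  have hpD : p ∈ closure D \ D := hcl ▸ Or.inl hpW'
  have hne : (𝓝[Z' \ {p}] p).NeBot := (mem_closure_iff_nhdsWithin_neBot.1 hpD.1).mono
    (nhdsWithin_mono p fun z hz => ⟨hDZ hz, fun hzp => hpD.2 (hzp ▸ hz)⟩)
  exact hne.ne hp

theorem exists_last (h : IsITowerFrom j W l Z') (hl : l ≠ []) :
    ∃ D ⊆ Z', D.Nonempty ∧ (∀ p ∈ D, p ∉ baseW X ∧ 𝓝[Z' \ {p}] p = ⊥) ∧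
      embW '' l.getLast hl ⊆ closure D := by
  induction l generalizing j W with
  | nil => exact absurd rfl hl
  | cons A l ih =>
    obtain ⟨Zm, ⟨D, rfl, hne, hform, hiso, hcl, -⟩, h⟩ := h
    cases l with
    | nil =>
      obtain rfl : Z' = W ∪ D := h
      refine ⟨D, subset_union_right, hne, fun p hp => ⟨?_, hiso p hp⟩, ?_⟩
      · obtain ⟨z, -, t, ht, rfl⟩ := hform p hp
        exact addC_notMem_baseW ht.1.ne' z
      · exact fun p hp => (hcl.symm ▸ Or.inr hp : p ∈ closure D \ D).1
    | cons A' l => exact ih h (List.cons_ne_nil A' l)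

end IsITowerFrom

theorem continuous_baseIncl (hbZ : baseW X ⊆ Z) : Continuous (baseIncl hbZ) :=
  (continuous_id.prodMk continuous_const).subtype_mk _

theorem isNoncutBase_range_baseIncl [ConnectedSpace X] (hbZ : baseW X ⊆ Z)
    (hXnc : ∀ x : X, IsPreconnected ({x}ᶜ : Set X)) :
    FSp.IsNoncutBase (range (baseIncl hbZ)) (JB Z) := by
  have himage : Subtype.val '' (range (baseIncl hbZ))ᶜ = Z \ baseW X := by
    rw [range_baseIncl, ← preimage_compl, Subtype.image_preimage_coe]; rfl
  refine ⟨?_, fun z hz => ?_, fun z hz => ?_, isPreconnected_range (continuous_baseIncl hbZ), ?_⟩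
  · rw [range_baseIncl]; exact baseW_isClosed.preimage continuous_subtype_val
  · exact subset_closure (himage ▸ mem_image_of_mem _ hz)
  · exact closure_subtype.2 (himage ▸ hz)
  · rintro _ ⟨x, rfl⟩
    rw [← image_singleton, ← image_compl_eq_range_sdiff_image (baseIncl_injective hbZ)]
    exact (hXnc x).image _ (continuous_baseIncl hbZ).continuousOn

end Tower

theorem stmt16_general {X : Type} [MetricSpace X] [ConnectedSpace X]
    (hXnc : ∀ x : X, IsPreconnected ({x}ᶜ : Set X))
    {k : ℕ} (S : Fin (k + 1) → Set X)
    (hSne : S (Fin.last k) ≠ ∅)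
    (Z : Set (X × (ℕ → ℝ))) (hZ : IsIModel (List.ofFn S) Z) :
    ∀ q : JSp Z,
      (∃ p : FPts (↥Z) (JB Z), JPt Z p = q ∧
          (p.val.1 : X × (ℕ → ℝ)) ∈ isoPts Z ∧ p.val.2 = 0) ↔
      ((∀ U : Set (JSp Z), IsOpen U → q ∈ U →
          ∃ V : Set (JSp Z), IsOpen V ∧ q ∈ V ∧ V ⊆ U ∧ IsConnected V ∧
            ∃ c ∈ V, ¬ IsPreconnected ({c}ᶜ : Set (JSp Z))) ∧
        IsPreconnected ({q}ᶜ : Set (JSp Z))) := by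
  have hl : List.ofFn S ≠ [] := by simp
  have hbZ : baseW X ⊆ Z := IsITowerFrom.subset hZ
  obtain ⟨x₀, hx₀⟩ := nonempty_iff_ne_empty.2 hSne
  obtain ⟨D, hDZ, ⟨d, hd⟩, hD, hlast⟩ := IsITowerFrom.exists_last hZ hl
  rw [List.getLast_ofFn_succ] at hlast
  have hDZ' : D ⊆ Z \ baseW X := fun p hp => ⟨hDZ hp, (hD p hp).1⟩
  have hx₀B : baseIncl hbZ x₀ ∈ JB Z := closure_mono hDZ' (hlast ⟨x₀, hx₀, rfl⟩)
  have hiso : ∀ p : Z, IsOpen ({p} : Set Z) → p ∉ range (baseIncl hbZ) := by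
    intro p hp hpK
    rw [range_baseIncl] at hpK
    exact disjoint_left.1 (IsITowerFrom.disjoint_isoPts hZ hl)
      ((mem_isoPts_iff_isOpen_singleton p).2 hp) hpK
  have hd_iso : IsOpen ({(⟨d, hDZ hd⟩ : Z)} : Set Z) :=
    (mem_isoPts_iff_isOpen_singleton _).1 ⟨hDZ hd, (hD d hd).2⟩
  intro q
  simp only [mem_isoPts_iff_isOpen_singleton]
  exact (isNoncutBase_range_baseIncl hbZ hXnc).exists_isOpen_singleton_iff (mem_range_self x₀)
    hx₀B hiso hd_iso q

theorem stmt16 {X : Type} [MetricSpace X] [CompactSpace X] [ConnectedSpace X]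
    (hXnc : ∀ x : X, IsPreconnected ({x}ᶜ : Set X))
    {k : ℕ} (S : Fin (k + 1) → Set X)
    (hScl : ∀ i, IsClosed (S i)) (hSmono : Monotone S) (hSne : S (Fin.last k) ≠ ∅)
    (Z : Set (X × (ℕ → ℝ))) (hZ : IsIModel (List.ofFn S) Z) :
    ∀ q : JSp Z,
      (∃ p : FPts (↥Z) (JB Z), JPt Z p = q ∧
          (p.val.1 : X × (ℕ → ℝ)) ∈ isoPts Z ∧ p.val.2 = 0) ↔
      ((∀ U : Set (JSp Z), IsOpen U → q ∈ U →
          ∃ V : Set (JSp Z), IsOpen V ∧ q ∈ V ∧ V ⊆ U ∧ IsConnected V ∧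
            ∃ c ∈ V, ¬ IsPreconnected ({c}ᶜ : Set (JSp Z))) ∧
        IsPreconnected ({q}ᶜ : Set (JSp Z))) :=
  stmt16_general hXnc S hSne Z hZ
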